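/- arXiv:1906.02310 — 2 statements merged into one kernel-verified Lean document; each statement's English description precedes it below -/
import Mathlib

section
/- Given a split extension of unitary magmas (X, A, B, κ, λ, α, β) with associated action b·x = λ(β(b)+κ(x)), the addition formula (κ(x)+β(b)) + (κ(x')+β(b')) = κ(x + b·x') + β(b+b') holds for all x,x' ∈ X and b,b' ∈ B. -/
/-- Semidirect product addition on `X × B` for an action `act : B → X → X`. -/
def sadd {X B : Type*} [AddZeroClass X] [AddZeroClass B]
    (act : B → X → X) (p q : X × B) : X × B :=
  (p.1 + act p.2 q.1, p.2 + q.2)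

/-- A split extension of unitary magmas `X → A ⇄ B` (Definition 1.4 of
Gran–Janelidze–Sobral): `kap`, `al`, `be` are magma homomorphisms, `lam`
preserves zero, and the equalities (11)-(17) hold. -/
structure SplitExt (X A B : Type*) [AddZeroClass X] [AddZeroClass A] [AddZeroClass B] where
  kap : X → A
  al : A → B
  be : B → A
  lam : A → X
  kap_zero : kap 0 = 0
  kap_add : ∀ x x', kap (x + x') = kap x + kap x'
  al_zero : al 0 = 0
  al_add : ∀ a a', al (a + a') = al a + al a'
  be_zero : be 0 = 0
  be_add : ∀ b b', be (b + b') = be b + be b'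
  lam_zero : lam 0 = 0
  lam_kap : ∀ x, lam (kap x) = x
  al_be : ∀ b, al (be b) = b
  lam_be : ∀ b, lam (be b) = 0
  al_kap : ∀ x, al (kap x) = 0
  split : ∀ a, kap (lam a) + be (al a) = a
  nondis : ∀ x b, lam (kap x + be b) = x
  assoc_left : ∀ x b a, kap x + (be b + a) = (kap x + be b) + a
  assoc_mid : ∀ x a b, kap x + (a + be b) = (kap x + a) + be b
  assoc_right : ∀ a x b, a + (kap x + be b) = (a + kap x) + be b

/-- The action of `B` on `X` associated to a split extension: `b·x = λ(β(b)+κ(x))`. -/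
def SplitExt.act {X A B : Type*} [AddZeroClass X] [AddZeroClass A] [AddZeroClass B]
    (E : SplitExt X A B) (b : B) (x : X) : X :=
  E.lam (E.be b + E.kap x)

namespace SplitExt

variable {X A B : Type*} [AddZeroClass X] [AddZeroClass A] [AddZeroClass B] (E : SplitExt X A B)

theorem al_be_add_kap (b : B) (x : X) : E.al (E.be b + E.kap x) = b := by
  rw [E.al_add, E.al_be, E.al_kap, add_zero]

theorem be_add_kap (b : B) (x : X) : E.be b + E.kap x = E.kap (E.act b x) + E.be b := by
  conv_lhs => rw [← E.split (E.be b + E.kap x), E.al_be_add_kap]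
  rfl

end SplitExt

/-- Formula (21): `(κ(x)+β(b)) + (κ(x')+β(b')) = κ(x + b·x') + β(b+b')`. -/
theorem stmt8 {X A B : Type*} [AddZeroClass X] [AddZeroClass A] [AddZeroClass B]
    (E : SplitExt X A B) :
    ∀ (x x' : X) (b b' : B),
      (E.kap x + E.be b) + (E.kap x' + E.be b') =
        E.kap (x + E.act b x') + E.be (b + b') := by
  intro x x' b b'
  calc (E.kap x + E.be b) + (E.kap x' + E.be b')
      = (E.kap x + (E.be b + E.kap x')) + E.be b' := by rw [E.assoc_right, E.assoc_left]
    _ = (E.kap x + (E.kap (E.act b x') + E.be b)) + E.be b' := by rw [E.be_add_kap]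
    _ = (E.kap (x + E.act b x') + E.be b) + E.be b' := by rw [E.assoc_mid, E.kap_add]
    _ = E.kap (x + E.act b x') + E.be (b + b') := by rw [← E.assoc_left, E.be_add]
end

section
/- Let (f,u,p) be a triple of magma homomorphisms between split extensions of unitary magmas E = (B,X,A,α,β,κ,λ) and E' = (B',X',A',α',β',κ',λ') satisfying λ'p = uλ and α'p = fα. Then automatically pκ = κ'u and pβ = β'f. -/
namespace SplitExt

variable {X A B X' A' B' : Type*}
  [AddZeroClass X] [AddZeroClass A] [AddZeroClass B]
  [AddZeroClass X'] [AddZeroClass A'] [AddZeroClass B']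

theorem map_eq_kap_add_be (E : SplitExt X A B) (E' : SplitExt X' A' B')
    {f : B → B'} {u : X → X'} {p : A → A'}
    (hlp : ∀ a, E'.lam (p a) = u (E.lam a)) (hap : ∀ a, E'.al (p a) = f (E.al a)) (a : A) :
    p a = E'.kap (u (E.lam a)) + E'.be (f (E.al a)) := by
  rw [← hlp, ← hap, E'.split]

theorem map_kap (E : SplitExt X A B) (E' : SplitExt X' A' B')
    {f : B → B'} {u : X → X'} {p : A → A'} (hf0 : f 0 = 0)
    (hlp : ∀ a, E'.lam (p a) = u (E.lam a)) (hap : ∀ a, E'.al (p a) = f (E.al a)) (x : X) :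
    p (E.kap x) = E'.kap (u x) := by
  rw [map_eq_kap_add_be E E' hlp hap, E.lam_kap, E.al_kap, hf0, E'.be_zero, add_zero]

theorem map_be (E : SplitExt X A B) (E' : SplitExt X' A' B')
    {f : B → B'} {u : X → X'} {p : A → A'} (hu0 : u 0 = 0)
    (hlp : ∀ a, E'.lam (p a) = u (E.lam a)) (hap : ∀ a, E'.al (p a) = f (E.al a)) (b : B) :
    p (E.be b) = E'.be (f b) := by
  rw [map_eq_kap_add_be E E' hlp hap, E.lam_be, E.al_be, hu0, E'.kap_zero, zero_add]

end SplitExt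

theorem stmt13_general {X A B X' A' B' : Type*}
    [AddZeroClass X] [AddZeroClass A] [AddZeroClass B]
    [AddZeroClass X'] [AddZeroClass A'] [AddZeroClass B']
    (E : SplitExt X A B) (E' : SplitExt X' A' B')
    (f : B → B') (u : X → X') (p : A → A')
    (hf0 : f 0 = 0)
    (hu0 : u 0 = 0)
    (hlp : ∀ a, E'.lam (p a) = u (E.lam a))
    (hap : ∀ a, E'.al (p a) = f (E.al a)) :
    (∀ x, p (E.kap x) = E'.kap (u x)) ∧ (∀ b, p (E.be b) = E'.be (f b)) :=
  ⟨SplitExt.map_kap E E' hf0 hlp hap, SplitExt.map_be E E' hu0 hlp hap⟩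

/-- Remark 2.2 (second half): for magma homomorphisms `f, u, p` between split
extensions, `λ'p = uλ` and `α'p = fα` imply `pκ = κ'u` and `pβ = β'f`. -/
theorem stmt13 {X A B X' A' B' : Type*}
    [AddZeroClass X] [AddZeroClass A] [AddZeroClass B]
    [AddZeroClass X'] [AddZeroClass A'] [AddZeroClass B']
    (E : SplitExt X A B) (E' : SplitExt X' A' B')
    (f : B → B') (u : X → X') (p : A → A')
    (hf0 : f 0 = 0) (hfadd : ∀ b b', f (b + b') = f b + f b')
    (hu0 : u 0 = 0) (huadd : ∀ x x', u (x + x') = u x + u x')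
    (hp0 : p 0 = 0) (hpadd : ∀ a a', p (a + a') = p a + p a')
    (hlp : ∀ a, E'.lam (p a) = u (E.lam a))
    (hap : ∀ a, E'.al (p a) = f (E.al a)) :
    (∀ x, p (E.kap x) = E'.kap (u x)) ∧ (∀ b, p (E.be b) = E'.be (f b)) :=
  stmt13_general E E' f u p hf0 hu0 hlp hap
end
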